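/- Let d ≥ 1 and let D ⊂ ℝ^d be a nonempty bounded open set. Let 0 < a < d and set b = a and ϱ = −a. Then there exists a constant C = C(d, a) such that for all x, y ∈ D with x ≠ y: ∫_D ∫_D |y−z|^{a−d} |z−w|^{−a} |w−x|^{a−d} dz dw ≤ C (diam(D))^a (1 + log(diam(D)/|x−y|)). -/

import Mathlib

open MeasureTheory Metric Module

open scoped ENNReal

/-! Write `R = diam D`. The bound holds even without the logarithm. On `D`,
`|y-z|^(a-d) ≤ R^(a/2) |y-z|^(a/2-d)`, and the Riesz composition estimate
`∫_{ℝ^d} |y-z|^(a/2-d) |z-w|^(-a) dz ≤ C |y-w|^(-a/2)` (local exponents `> -d`, total exponent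
`< -d`) reduces the double integral to `R^(a/2) ∫_D |y-w|^(-a/2) |w-x|^(a-d) dw ≤ C R^a`.
Both estimates split space according to which singularity is nearer, and every radial
integral that remains is, by translation and dilation, a multiple of an integral over the unit
ball or its complement. -/

theorem Real.rpow_add_le_rpow_mul_rpow {u R b e : ℝ} (hu : 0 ≤ u) (huR : u ≤ R) (hb : 0 ≤ b)
    (hbe : b + e ≠ 0) : u ^ (b + e) ≤ R ^ b * u ^ e := by
  rw [Real.rpow_add' hu hbe]
  exact mul_le_mul_of_nonneg_right (Real.rpow_le_rpow hu huR hb) (Real.rpow_nonneg hu e)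

/-- Whichever of `u`, `v` is smaller, the other one is at least `r`. -/
theorem Real.rpow_mul_rpow_le_add_of_two_mul_le {u v r p q : ℝ} (hp : p < 0) (hq : q < 0)
    (hu : 0 ≤ u) (hv : 0 ≤ v) (h : 2 * r ≤ u + v) :
    u ^ p * v ^ q ≤ u ^ p * max r u ^ q + v ^ q * max r v ^ p := by
  wlog huv : u ≤ v generalizing u v p q with H
  · have := H hq hp hv hu (by linarith) (le_of_not_ge huv)
    linarith [mul_comm (u ^ p) (v ^ q)]
  have hv' : 0 ≤ v ^ q * max r v ^ p :=
    mul_nonneg (Real.rpow_nonneg hv _) (Real.rpow_nonneg (hv.trans (le_max_right _ _)) _)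
  rcases hu.eq_or_lt with rfl | hu
  · rw [Real.zero_rpow hp.ne, zero_mul, zero_mul, zero_add]
    exact hv'
  · have hmax : max r u ≤ v := max_le (by linarith) huv
    have : v ^ q ≤ max r u ^ q :=
      Real.rpow_le_rpow_of_nonpos (hu.trans_le (le_max_right _ _)) hmax hq.le
    nlinarith [Real.rpow_nonneg hu.le p]

theorem preimage_inv_smul_sub_closedBall_zero_one {E : Type*} [NormedAddCommGroup E]
    [NormedSpace ℝ E] (c : E) {r : ℝ} (hr : 0 < r) :
    (fun z => r⁻¹ • (z - c)) ⁻¹' closedBall (0 : E) 1 = closedBall c r := by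
  ext z
  simp [mem_closedBall, dist_eq_norm, norm_smul, abs_of_pos hr, inv_mul_le_iff₀ hr]

namespace MeasureTheory.Measure

variable {E : Type*} [NormedAddCommGroup E] [NormedSpace ℝ E] [FiniteDimensional ℝ E]
  [MeasurableSpace E] [BorelSpace E] (μ : Measure E) [μ.IsAddHaarMeasure]

theorem lintegral_comp_inv_smul_sub (g : E → ℝ≥0∞) (c : E) {r : ℝ} (hr : 0 < r) :
    ∫⁻ z, g (r⁻¹ • (z - c)) ∂μ = ENNReal.ofReal (r ^ finrank ℝ E) * ∫⁻ z, g z ∂μ := by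
  have hr' : r⁻¹ ≠ 0 := inv_ne_zero hr.ne'
  have := lintegral_map_equiv g (MeasurableEquiv.smul₀ r⁻¹ hr' : E ≃ᵐ E) (μ := μ)
  rw [MeasurableEquiv.coe_smul₀, map_addHaar_smul μ hr', lintegral_smul_measure] at this
  rw [lintegral_sub_right_eq_self (fun z => g (r⁻¹ • z)) c, ← this, inv_pow, inv_inv,
    abs_of_pos (by positivity), smul_eq_mul]

theorem setLIntegral_preimage_inv_smul_sub_norm_rpow {S : Set E}
    (hS : MeasurableSet S) (c : E) {r : ℝ} (hr : 0 < r) (p : ℝ) :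
    ∫⁻ z in (fun z => r⁻¹ • (z - c)) ⁻¹' S, ENNReal.ofReal (‖z - c‖ ^ p) ∂μ =
      ENNReal.ofReal (r ^ (p + finrank ℝ E)) * ∫⁻ u in S, ENNReal.ofReal (‖u‖ ^ p) ∂μ := by
  have hmeas : MeasurableSet ((fun z => r⁻¹ • (z - c)) ⁻¹' S) :=
    hS.preimage (by fun_prop)
  have hpt : ∀ z, ((fun z => r⁻¹ • (z - c)) ⁻¹' S).indicator
      (fun z => ENNReal.ofReal (‖z - c‖ ^ p)) z =
      ENNReal.ofReal (r ^ p) * S.indicator (fun u => ENNReal.ofReal (‖u‖ ^ p)) (r⁻¹ • (z - c)) := by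
    intro z
    by_cases hz : r⁻¹ • (z - c) ∈ S
    · rw [Set.indicator_of_mem hz, Set.indicator_of_mem (by exact hz),
        ← ENNReal.ofReal_mul (by positivity), norm_smul, Real.norm_of_nonneg (by positivity),
        Real.mul_rpow (by positivity) (norm_nonneg _), Real.inv_rpow hr.le,
        mul_inv_cancel_left₀ (by positivity)]
    · rw [Set.indicator_of_notMem hz, Set.indicator_of_notMem (by exact hz), mul_zero]
  rw [← lintegral_indicator hmeas, ← lintegral_indicator hS, lintegral_congr hpt,
    lintegral_const_mul' _ _ ENNReal.ofReal_ne_top, lintegral_comp_inv_smul_sub μ _ c hr,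
    ← mul_assoc, ← ENNReal.ofReal_mul (by positivity), ← Real.rpow_natCast,
    ← Real.rpow_add hr]

theorem setLIntegral_closedBall_norm_sub_rpow (c : E) {r : ℝ} (hr : 0 < r) (p : ℝ) :
    ∫⁻ z in closedBall c r, ENNReal.ofReal (‖z - c‖ ^ p) ∂μ =
      ENNReal.ofReal (r ^ (p + finrank ℝ E)) *
        ∫⁻ u in closedBall 0 1, ENNReal.ofReal (‖u‖ ^ p) ∂μ := by
  rw [← setLIntegral_preimage_inv_smul_sub_norm_rpow μ measurableSet_closedBall c hr,
    preimage_inv_smul_sub_closedBall_zero_one c hr]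

theorem setLIntegral_compl_closedBall_norm_sub_rpow (c : E) {r : ℝ} (hr : 0 < r) (p : ℝ) :
    ∫⁻ z in (closedBall c r)ᶜ, ENNReal.ofReal (‖z - c‖ ^ p) ∂μ =
      ENNReal.ofReal (r ^ (p + finrank ℝ E)) *
        ∫⁻ u in (closedBall 0 1)ᶜ, ENNReal.ofReal (‖u‖ ^ p) ∂μ := by
  rw [← setLIntegral_preimage_inv_smul_sub_norm_rpow μ measurableSet_closedBall.compl c hr,
    Set.preimage_compl, preimage_inv_smul_sub_closedBall_zero_one c hr]

theorem setLIntegral_closedBall_norm_rpow_lt_top [Nontrivial E] {p : ℝ}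
    (hp : -(finrank ℝ E : ℝ) < p) :
    ∫⁻ u in closedBall 0 1, ENNReal.ofReal (‖u‖ ^ p) ∂μ < ∞ := by
  have hint : LocallyIntegrable (fun u : E => ‖u‖ ^ p) μ :=
    locallyIntegrable_of_norm_le_rpow finrank_pos (C := 1) (α := -p) (by linarith)
      (ae_of_all _ fun u => by
        rw [neg_neg, one_mul, Real.norm_of_nonneg (Real.rpow_nonneg (norm_nonneg _) _)])
      (by fun_prop : Measurable fun u : E => ‖u‖ ^ p).aestronglyMeasurable
  exact (hint.integrableOn_isCompact (isCompact_closedBall 0 1)).lintegral_lt_top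

theorem setLIntegral_compl_closedBall_norm_rpow_lt_top {p : ℝ}
    (hp : p < -(finrank ℝ E : ℝ)) :
    ∫⁻ u in (closedBall 0 1)ᶜ, ENNReal.ofReal (‖u‖ ^ p) ∂μ < ∞ := by
  have hpt : ∀ u ∈ (closedBall (0 : E) 1)ᶜ,
      ENNReal.ofReal (‖u‖ ^ p) ≤ ENNReal.ofReal (2 ^ (-p)) * ENNReal.ofReal ((1 + ‖u‖) ^ p) := by
    intro u hu
    have hu : 1 < ‖u‖ := by simpa using hu
    rw [← ENNReal.ofReal_mul (by positivity)]
    refine ENNReal.ofReal_le_ofReal ?_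
    calc ‖u‖ ^ p = 2 ^ (-p) * (2 * ‖u‖) ^ p := by
          rw [Real.mul_rpow (by norm_num) (by positivity), ← mul_assoc,
            ← Real.rpow_add (by norm_num), neg_add_cancel, Real.rpow_zero, one_mul]
      _ ≤ 2 ^ (-p) * (1 + ‖u‖) ^ p := by
          refine mul_le_mul_of_nonneg_left (Real.rpow_le_rpow_of_nonpos (by positivity)
            (by linarith) (by linarith [(finrank ℝ E).cast_nonneg (α := ℝ)])) (by positivity)
  calc ∫⁻ u in (closedBall 0 1)ᶜ, ENNReal.ofReal (‖u‖ ^ p) ∂μ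
      ≤ ∫⁻ u in (closedBall 0 1)ᶜ, ENNReal.ofReal (2 ^ (-p)) *
          ENNReal.ofReal ((1 + ‖u‖) ^ p) ∂μ :=
        setLIntegral_mono (by fun_prop) hpt
    _ ≤ ∫⁻ u, ENNReal.ofReal (2 ^ (-p)) * ENNReal.ofReal ((1 + ‖u‖) ^ p) ∂μ :=
        setLIntegral_le_lintegral _ _
    _ < ∞ := by
        rw [lintegral_const_mul' _ _ ENNReal.ofReal_ne_top]
        refine ENNReal.mul_lt_top ENNReal.ofReal_lt_top ?_
        simpa using finite_integral_one_add_norm (μ := μ) (r := -p) (by linarith)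

theorem exists_lintegral_norm_sub_rpow_mul_max_rpow_le [Nontrivial E]
    {p q : ℝ} (hp : -(finrank ℝ E : ℝ) < p) (hpq : p + q < -(finrank ℝ E : ℝ)) :
    ∃ C : ℝ≥0∞, C ≠ ∞ ∧ ∀ (c : E) {r : ℝ}, 0 < r →
      ∫⁻ z, ENNReal.ofReal (‖z - c‖ ^ p * max r ‖z - c‖ ^ q) ∂μ ≤
        C * ENNReal.ofReal (r ^ (p + q + finrank ℝ E)) := by
  refine ⟨_, (ENNReal.add_lt_top.2 ⟨setLIntegral_closedBall_norm_rpow_lt_top μ hp,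
    setLIntegral_compl_closedBall_norm_rpow_lt_top μ hpq⟩).ne, fun c r hr => le_of_eq ?_⟩
  have hin : ∀ z ∈ closedBall c r, ENNReal.ofReal (‖z - c‖ ^ p * max r ‖z - c‖ ^ q) =
      ENNReal.ofReal (r ^ q) * ENNReal.ofReal (‖z - c‖ ^ p) := fun z hz => by
    rw [max_eq_left (mem_closedBall_iff_norm.1 hz), mul_comm,
      ENNReal.ofReal_mul (Real.rpow_nonneg hr.le _)]
  have hout : ∀ z ∈ (closedBall c r)ᶜ, ENNReal.ofReal (‖z - c‖ ^ p * max r ‖z - c‖ ^ q) =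
      ENNReal.ofReal (‖z - c‖ ^ (p + q)) := fun z hz => by
    have hz : r < ‖z - c‖ := by simpa [dist_eq_norm] using hz
    rw [max_eq_right hz.le, Real.rpow_add (hr.trans hz)]
  rw [← lintegral_add_compl _ (measurableSet_closedBall (x := c) (ε := r)),
    setLIntegral_congr_fun measurableSet_closedBall hin,
    setLIntegral_congr_fun measurableSet_closedBall.compl hout,
    lintegral_const_mul' _ _ ENNReal.ofReal_ne_top, setLIntegral_closedBall_norm_sub_rpow μ c hr,
    setLIntegral_compl_closedBall_norm_sub_rpow μ c hr, ← mul_assoc,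
    ← ENNReal.ofReal_mul (Real.rpow_nonneg hr.le _), ← Real.rpow_add hr, add_mul,
    add_comm q, add_assoc]
  ring_nf

theorem exists_lintegral_norm_sub_rpow_mul_norm_sub_rpow_le [Nontrivial E]
    {p q : ℝ} (hp : -(finrank ℝ E : ℝ) < p) (hq : -(finrank ℝ E : ℝ) < q)
    (hpq : p + q < -(finrank ℝ E : ℝ)) :
    ∃ C : ℝ≥0∞, C ≠ ∞ ∧ ∀ y w : E, y ≠ w →
      ∫⁻ z, ENNReal.ofReal (‖y - z‖ ^ p * ‖z - w‖ ^ q) ∂μ ≤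
        C * ENNReal.ofReal (‖y - w‖ ^ (p + q + finrank ℝ E)) := by
  obtain ⟨C₁, hC₁, h₁⟩ := exists_lintegral_norm_sub_rpow_mul_max_rpow_le μ hp hpq
  obtain ⟨C₂, hC₂, h₂⟩ :=
    exists_lintegral_norm_sub_rpow_mul_max_rpow_le μ (p := q) (q := p) hq (by linarith)
  set e := p + q + finrank ℝ E
  refine ⟨(C₁ + C₂) * ENNReal.ofReal (2⁻¹ ^ e),
    ENNReal.mul_ne_top (ENNReal.add_ne_top.2 ⟨hC₁, hC₂⟩) ENNReal.ofReal_ne_top,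
    fun y w hyw => ?_⟩
  have hr : 0 < 2⁻¹ * ‖y - w‖ := by positivity [sub_ne_zero.2 hyw]
  have hpt : ∀ z, ENNReal.ofReal (‖y - z‖ ^ p * ‖z - w‖ ^ q) ≤
      ENNReal.ofReal (‖z - y‖ ^ p * max (2⁻¹ * ‖y - w‖) ‖z - y‖ ^ q) +
        ENNReal.ofReal (‖z - w‖ ^ q * max (2⁻¹ * ‖y - w‖) ‖z - w‖ ^ p) := fun z => by
    have hmax : ∀ u : ℝ, 0 ≤ u → ∀ t : ℝ, 0 ≤ max (2⁻¹ * ‖y - w‖) u ^ t := fun u hu t =>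
      Real.rpow_nonneg (hu.trans (le_max_right _ _)) t
    rw [← ENNReal.ofReal_add (mul_nonneg (by positivity) (hmax _ (norm_nonneg _) _))
      (mul_nonneg (by positivity) (hmax _ (norm_nonneg _) _)), norm_sub_rev y z]
    refine ENNReal.ofReal_le_ofReal (Real.rpow_mul_rpow_le_add_of_two_mul_le (by linarith)
      (by linarith) (norm_nonneg _) (norm_nonneg _) ?_)
    linarith [norm_sub_le_norm_sub_add_norm_sub y z w, norm_sub_rev y z]
  calc ∫⁻ z, ENNReal.ofReal (‖y - z‖ ^ p * ‖z - w‖ ^ q) ∂μ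
      ≤ ∫⁻ z, ENNReal.ofReal (‖z - y‖ ^ p * max (2⁻¹ * ‖y - w‖) ‖z - y‖ ^ q) +
          ENNReal.ofReal (‖z - w‖ ^ q * max (2⁻¹ * ‖y - w‖) ‖z - w‖ ^ p) ∂μ :=
        lintegral_mono hpt
    _ = (∫⁻ z, ENNReal.ofReal (‖z - y‖ ^ p * max (2⁻¹ * ‖y - w‖) ‖z - y‖ ^ q) ∂μ) +
          ∫⁻ z, ENNReal.ofReal (‖z - w‖ ^ q * max (2⁻¹ * ‖y - w‖) ‖z - w‖ ^ p) ∂μ :=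
        lintegral_add_left (by fun_prop) _
    _ ≤ C₁ * ENNReal.ofReal ((2⁻¹ * ‖y - w‖) ^ e) + C₂ * ENNReal.ofReal ((2⁻¹ * ‖y - w‖) ^ e) :=
        add_le_add (h₁ y hr) (by simpa only [e, add_comm q p] using h₂ w hr)
    _ = (C₁ + C₂) * ENNReal.ofReal (2⁻¹ ^ e) * ENNReal.ofReal (‖y - w‖ ^ e) := by
        rw [Real.mul_rpow (by norm_num) (norm_nonneg _), ENNReal.ofReal_mul (by positivity)]
        ring

theorem exists_setLIntegral_closedBall_inter_rpow_mul_rpow_le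
    [Nontrivial E] {p q : ℝ} (hp : p < 0) (hq : q < 0) (hpq : -(finrank ℝ E : ℝ) < p + q) :
    ∃ C : ℝ≥0∞, C ≠ ∞ ∧ ∀ x y : E, ∀ {R : ℝ}, 0 < R →
      ∫⁻ w in closedBall y R ∩ closedBall x R, ENNReal.ofReal (‖y - w‖ ^ p * ‖w - x‖ ^ q) ∂μ ≤
        C * ENNReal.ofReal (R ^ (p + q + finrank ℝ E)) := by
  set K := ∫⁻ u in closedBall 0 1, ENNReal.ofReal (‖u‖ ^ (p + q)) ∂μ
  have hK : K ≠ ∞ := (setLIntegral_closedBall_norm_rpow_lt_top μ hpq).ne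
  refine ⟨K + K, ENNReal.add_ne_top.2 ⟨hK, hK⟩, fun x y R hR => ?_⟩
  have hpt : ∀ w, ENNReal.ofReal (‖y - w‖ ^ p * ‖w - x‖ ^ q) ≤
      ENNReal.ofReal (‖w - y‖ ^ (p + q)) + ENNReal.ofReal (‖w - x‖ ^ (p + q)) := fun w => by
    rw [← ENNReal.ofReal_add (by positivity) (by positivity), norm_sub_rev y w]
    refine ENNReal.ofReal_le_ofReal ?_
    have := Real.rpow_mul_rpow_le_add_of_two_mul_le (r := 0) hp hq (norm_nonneg (w - y))
      (norm_nonneg (w - x)) (by linarith [norm_nonneg (w - y), norm_nonneg (w - x)])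
    rwa [max_eq_right (norm_nonneg _), max_eq_right (norm_nonneg _),
      ← Real.rpow_add' (norm_nonneg _) (by linarith),
      ← Real.rpow_add' (norm_nonneg _) (by linarith), add_comm q p] at this
  calc ∫⁻ w in closedBall y R ∩ closedBall x R, ENNReal.ofReal (‖y - w‖ ^ p * ‖w - x‖ ^ q) ∂μ
      ≤ ∫⁻ w in closedBall y R ∩ closedBall x R,
          ENNReal.ofReal (‖w - y‖ ^ (p + q)) + ENNReal.ofReal (‖w - x‖ ^ (p + q)) ∂μ :=
        lintegral_mono hpt
    _ = (∫⁻ w in closedBall y R ∩ closedBall x R, ENNReal.ofReal (‖w - y‖ ^ (p + q)) ∂μ) +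
          ∫⁻ w in closedBall y R ∩ closedBall x R, ENNReal.ofReal (‖w - x‖ ^ (p + q)) ∂μ :=
        lintegral_add_left (by fun_prop) _
    _ ≤ (∫⁻ w in closedBall y R, ENNReal.ofReal (‖w - y‖ ^ (p + q)) ∂μ) +
          ∫⁻ w in closedBall x R, ENNReal.ofReal (‖w - x‖ ^ (p + q)) ∂μ :=
        add_le_add (lintegral_mono_set Set.inter_subset_left)
          (lintegral_mono_set Set.inter_subset_right)
    _ = (K + K) * ENNReal.ofReal (R ^ (p + q + finrank ℝ E)) := by
        rw [setLIntegral_closedBall_norm_sub_rpow μ y hR,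
          setLIntegral_closedBall_norm_sub_rpow μ x hR]
        ring

theorem exists_double_setLIntegral_riesz_le [Nontrivial E] {a : ℝ}
    (ha : 0 < a) (han : a < finrank ℝ E) :
    ∃ C : ℝ≥0∞, C ≠ ∞ ∧ ∀ D : Set E, Bornology.IsBounded D → ∀ x ∈ D, ∀ y ∈ D, x ≠ y →
      ∫⁻ w in D, ∫⁻ z in D, ENNReal.ofReal (‖y - z‖ ^ (a - finrank ℝ E) * ‖z - w‖ ^ (-a) *
        ‖w - x‖ ^ (a - finrank ℝ E)) ∂μ ∂μ ≤ C * ENNReal.ofReal (diam D ^ a) := by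
  set n : ℝ := (finrank ℝ E : ℝ)
  obtain ⟨C₁, hC₁, hconv⟩ := exists_lintegral_norm_sub_rpow_mul_norm_sub_rpow_le μ
    (p := a / 2 - n) (q := -a) (by linarith) (by linarith) (by linarith)
  obtain ⟨C₂, hC₂, hloc⟩ := exists_setLIntegral_closedBall_inter_rpow_mul_rpow_le μ
    (p := -(a / 2)) (q := a - n) (by linarith) (by linarith) (by linarith)
  refine ⟨C₁ * C₂, ENNReal.mul_ne_top hC₁ hC₂, fun D hD x hx y hy hxy => ?_⟩
  set R := diam D
  have hR : 0 < R := (dist_pos.2 hxy).trans_le (dist_le_diam_of_mem hD hx hy)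
  have hball : ∀ c ∈ D, D ⊆ closedBall c R := fun c hc z hz => dist_le_diam_of_mem hD hz hc
  have hinner : ∀ w, w ≠ y →
      ∫⁻ z in D, ENNReal.ofReal (‖y - z‖ ^ (a - n) * ‖z - w‖ ^ (-a) * ‖w - x‖ ^ (a - n)) ∂μ ≤
        ENNReal.ofReal (R ^ (a / 2)) * C₁ *
          ENNReal.ofReal (‖y - w‖ ^ (-(a / 2)) * ‖w - x‖ ^ (a - n)) := fun w hwy => by
    have hpt : ∀ z ∈ D,
        ENNReal.ofReal (‖y - z‖ ^ (a - n) * ‖z - w‖ ^ (-a) * ‖w - x‖ ^ (a - n)) ≤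
          ENNReal.ofReal (R ^ (a / 2) * ‖w - x‖ ^ (a - n)) *
            ENNReal.ofReal (‖y - z‖ ^ (a / 2 - n) * ‖z - w‖ ^ (-a)) := fun z hz => by
      have := Real.rpow_add_le_rpow_mul_rpow (norm_nonneg (y - z))
        (by simpa [dist_eq_norm] using hball z hz hy) (half_pos ha).le
        (show a / 2 + (a / 2 - n) ≠ 0 by linarith)
      rw [show a / 2 + (a / 2 - n) = a - n by ring] at this
      rw [← ENNReal.ofReal_mul (by positivity)]
      refine ENNReal.ofReal_le_ofReal ?_
      calc ‖y - z‖ ^ (a - n) * ‖z - w‖ ^ (-a) * ‖w - x‖ ^ (a - n)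
          ≤ R ^ (a / 2) * ‖y - z‖ ^ (a / 2 - n) * ‖z - w‖ ^ (-a) * ‖w - x‖ ^ (a - n) := by
            gcongr
        _ = _ := by ring
    calc ∫⁻ z in D, ENNReal.ofReal (‖y - z‖ ^ (a - n) * ‖z - w‖ ^ (-a) * ‖w - x‖ ^ (a - n)) ∂μ
        ≤ ∫⁻ z, ENNReal.ofReal (R ^ (a / 2) * ‖w - x‖ ^ (a - n)) *
            ENNReal.ofReal (‖y - z‖ ^ (a / 2 - n) * ‖z - w‖ ^ (-a)) ∂μ :=
          (setLIntegral_mono (by fun_prop) hpt).trans (setLIntegral_le_lintegral _ _)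
      _ ≤ ENNReal.ofReal (R ^ (a / 2) * ‖w - x‖ ^ (a - n)) *
            (C₁ * ENNReal.ofReal (‖y - w‖ ^ (a / 2 - n + -a + n))) := by
          rw [lintegral_const_mul' _ _ ENNReal.ofReal_ne_top]
          gcongr
          exact hconv y w hwy.symm
      _ = _ := by
          rw [show a / 2 - n + -a + n = -(a / 2) by ring, ENNReal.ofReal_mul (by positivity),
            ENNReal.ofReal_mul (by positivity)]
          ring
  calc ∫⁻ w in D, ∫⁻ z in D,
        ENNReal.ofReal (‖y - z‖ ^ (a - n) * ‖z - w‖ ^ (-a) * ‖w - x‖ ^ (a - n)) ∂μ ∂μ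
      ≤ ∫⁻ w in D, ENNReal.ofReal (R ^ (a / 2)) * C₁ *
          ENNReal.ofReal (‖y - w‖ ^ (-(a / 2)) * ‖w - x‖ ^ (a - n)) ∂μ :=
        lintegral_mono_ae (ae_restrict_of_ae ((μ.ae_ne y).mono hinner))
    _ ≤ ENNReal.ofReal (R ^ (a / 2)) * C₁ * ∫⁻ w in closedBall y R ∩ closedBall x R,
          ENNReal.ofReal (‖y - w‖ ^ (-(a / 2)) * ‖w - x‖ ^ (a - n)) ∂μ := by
        rw [lintegral_const_mul' _ _ (ENNReal.mul_ne_top ENNReal.ofReal_ne_top hC₁)]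
        gcongr
        exact Set.subset_inter (hball y hy) (hball x hx)
    _ ≤ ENNReal.ofReal (R ^ (a / 2)) * C₁ *
          (C₂ * ENNReal.ofReal (R ^ (-(a / 2) + (a - n) + n))) := by
        gcongr
        exact hloc x y hR
    _ = C₁ * C₂ * ENNReal.ofReal (R ^ a) := by
        have hRa : ENNReal.ofReal (R ^ (a / 2)) * ENNReal.ofReal (R ^ (a / 2)) =
            ENNReal.ofReal (R ^ a) := by
          rw [← ENNReal.ofReal_mul (by positivity), ← Real.rpow_add hR, add_halves]
        rw [show -(a / 2) + (a - n) + n = a / 2 by ring, ← hRa]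
        ring

end MeasureTheory.Measure

theorem double_riesz_integral_log_case (d : ℕ) (hd : 1 ≤ d) (a : ℝ)
    (ha : 0 < a) (had : a < d) :
    ∃ C : ℝ, 0 < C ∧
      ∀ D : Set (EuclideanSpace ℝ (Fin d)), D.Nonempty → IsOpen D →
        Bornology.IsBounded D →
        ∀ x ∈ D, ∀ y ∈ D, x ≠ y →
          (∫⁻ w in D, ∫⁻ z in D,
              ENNReal.ofReal (‖y - z‖ ^ (a - (d : ℝ)) * ‖z - w‖ ^ (-a) *
                ‖w - x‖ ^ (a - (d : ℝ)))) ≤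
            ENNReal.ofReal (C * diam D ^ a * (1 + Real.log (diam D / ‖x - y‖))) := by
  have : Nontrivial (EuclideanSpace ℝ (Fin d)) :=
    Module.nontrivial_of_finrank_pos (by rw [finrank_euclideanSpace_fin]; omega)
  obtain ⟨M, hM, hbound⟩ := Measure.exists_double_setLIntegral_riesz_le
    (volume : Measure (EuclideanSpace ℝ (Fin d))) ha (by rwa [finrank_euclideanSpace_fin])
  refine ⟨M.toReal + 1, by positivity, fun D _ _ hD x hx y hy hxy => ?_⟩
  have h := hbound D hD x hx y hy hxy
  rw [finrank_euclideanSpace_fin] at h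
  refine h.trans ?_
  have hxyR : ‖x - y‖ ≤ diam D := by
    rw [← dist_eq_norm]
    exact dist_le_diam_of_mem hD hx hy
  have hlog : 0 ≤ Real.log (diam D / ‖x - y‖) :=
    Real.log_nonneg ((one_le_div (norm_pos_iff.2 (sub_ne_zero.2 hxy))).2 hxyR)
  have hRa : 0 ≤ diam D ^ a := Real.rpow_nonneg diam_nonneg a
  calc M * ENNReal.ofReal (diam D ^ a) = ENNReal.ofReal (M.toReal * diam D ^ a) := by
        rw [ENNReal.ofReal_mul ENNReal.toReal_nonneg, ENNReal.ofReal_toReal hM]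
    _ ≤ _ := ENNReal.ofReal_le_ofReal <| by
        nlinarith [mul_nonneg (mul_nonneg (by positivity : 0 ≤ M.toReal + 1) hRa) hlog]
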